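/- arXiv:2305.03580 — 3 statements merged into one kernel-verified Lean document; each statement's English description precedes it below -/
import Mathlib

section
/- Let A, B, C, D, E be real numbers, set Pf := A·C − B² − D·E, and let M be the 4×4 real matrix with rows (B, −A, 0, −D), (C, −B, D, 0), (0, E, B, C), (−E, 0, −A, −B). Then M² = −Pf · I₄. Consequently, if Pf ≠ 0, the normalized matrix ρ := |Pf|^(−1/2) · M satisfies ρ² = −sgn(Pf) · I₄; in particular ρ² = −I₄ when Pf > 0 (elliptic case) and ρ² = +I₄ when Pf < 0 (hyperbolic case). -/
open Matrix

/-- The matrix `M` of `π_Ω ∘ α` squares to `−Pf·I₄`, and when `Pf ≠ 0` the normalized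
matrix `ρ = |Pf|^(−1/2)·M` satisfies `ρ² = −sgn(Pf)·I₄`; in particular `ρ² = −I₄` in the
elliptic case `Pf > 0` and `ρ² = I₄` in the hyperbolic case `Pf < 0`. -/
theorem rho_squares (A B C D E Pf : ℝ) (hPf : Pf = A * C - B ^ 2 - D * E)
    (M : Matrix (Fin 4) (Fin 4) ℝ)
    (hM : M = !![B, -A, 0, -D; C, -B, D, 0; 0, E, B, C; -E, 0, -A, -B]) :
    M * M = (-Pf) • (1 : Matrix (Fin 4) (Fin 4) ℝ) ∧
      (Pf ≠ 0 →
        ((Real.sqrt |Pf|)⁻¹ • M) * ((Real.sqrt |Pf|)⁻¹ • M)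
            = (-(Real.sign Pf)) • (1 : Matrix (Fin 4) (Fin 4) ℝ) ∧
        (0 < Pf →
          ((Real.sqrt |Pf|)⁻¹ • M) * ((Real.sqrt |Pf|)⁻¹ • M)
            = -(1 : Matrix (Fin 4) (Fin 4) ℝ)) ∧
        (Pf < 0 →
          ((Real.sqrt |Pf|)⁻¹ • M) * ((Real.sqrt |Pf|)⁻¹ • M)
            = (1 : Matrix (Fin 4) (Fin 4) ℝ))) := by
  have hsq : M * M = (-Pf) • (1 : Matrix (Fin 4) (Fin 4) ℝ) := by
    subst hM hPf
    ext i j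
    fin_cases i <;> fin_cases j <;>
      simp [Matrix.mul_apply, Fin.sum_univ_four, Matrix.one_apply] <;> ring
  refine ⟨hsq, fun hne => ?_⟩
  have habs : |Pf| ≠ 0 := abs_ne_zero.mpr hne
  have hsqrt : Real.sqrt |Pf| * Real.sqrt |Pf| = |Pf| :=
    Real.mul_self_sqrt (abs_nonneg Pf)
  have hmain : ((Real.sqrt |Pf|)⁻¹ • M) * ((Real.sqrt |Pf|)⁻¹ • M)
      = (-(Real.sign Pf)) • (1 : Matrix (Fin 4) (Fin 4) ℝ) := by
    rw [Matrix.smul_mul, Matrix.mul_smul, hsq, smul_smul, smul_smul,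
      ← mul_inv, hsqrt]
    congr 1
    rcases lt_or_gt_of_ne hne with h | h
    · rw [Real.sign_of_neg h, abs_of_neg h]
      field_simp
    · rw [Real.sign_of_pos h, abs_of_pos h]
      field_simp
  refine ⟨hmain, fun hpos => ?_, fun hneg => ?_⟩
  · rw [hmain, Real.sign_of_pos hpos]; simp
  · rw [hmain, Real.sign_of_neg hneg]; simp
end

section
/- Let A, B, C, D be real numbers with D ≠ 0 and let g be the 4×4 real symmetric matrix with rows (2C, −2B, D, 0), (−2B, 2A, 0, D), (D, 0, 0, 0), (0, D, 0, 0). Then there exists an invertible 4×4 real matrix Q such that Qᵀ g Q = diag(1, 1, −1, −1); that is, the symmetric bilinear form defined by g on ℝ⁴ is nondegenerate of split signature (2,2). -/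
/-!
Split `ℝ⁴ = ℝ² ⊕ ℝ²` into the `(x, y)` and `(p, q)` directions. Then `g` is the block matrix
`[[S, D], [D, 0]]` with `S` symmetric, and the column operations `Q = [[1, 1], [X, Y]]` with
`2 D X = 1 - S` and `2 D Y = -(1 + S)` turn it into `[[1, 0], [0, -1]]`; the determinant of `Q`
is `det (Y - X) = (-D⁻¹) ^ 2 ≠ 0`.
-/

open Matrix

namespace Matrix

variable {m n K : Type*}

def Congruent [Fintype n] [DecidableEq n] [CommSemiring K] (M N : Matrix n n K) : Prop :=
  ∃ Q : Matrix n n K, IsUnit Q ∧ Qᵀ * M * Q = N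

theorem Congruent.reindex [Fintype m] [Fintype n] [DecidableEq m] [DecidableEq n] [CommSemiring K]
    {M N : Matrix m m K} (h : M.Congruent N) (e : m ≃ n) :
    (Matrix.reindex e e M).Congruent (Matrix.reindex e e N) := by
  obtain ⟨Q, hQ, hMN⟩ := h
  refine ⟨Matrix.reindex e e Q, hQ.map (reindexAlgEquiv K K e), ?_⟩
  simp only [reindex_apply, transpose_submatrix, submatrix_mul_equiv, ← hMN]

theorem congruent_fromBlocks_smul_one [Fintype n] [DecidableEq n] [Field K]
    (h2 : (2 : K) ≠ 0) {S : Matrix n n K} (hS : S.IsSymm) {D : K} (hD : D ≠ 0) :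
    (fromBlocks S (D • 1) (D • 1) (0 : Matrix n n K)).Congruent (fromBlocks 1 0 0 (-1)) := by
  obtain ⟨c, hc⟩ : ∃ c : K, D * c + D * c = 1 := ⟨(2 * D)⁻¹, by field_simp; ring⟩
  refine ⟨fromBlocks 1 1 (c • (1 - S)) (-(c • (1 + S))), ?_, ?_⟩
  · have hYX : -(c • (1 + S)) - c • (1 - S) = (-(c + c)) • (1 : Matrix n n K) := by module
    have hcc : -(c + c) ≠ 0 :=
      neg_ne_zero.mpr (right_ne_zero_of_mul_eq_one (by linear_combination hc : D * (c + c) = 1))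
    rw [isUnit_iff_isUnit_det, det_fromBlocks_one₁₁, Matrix.mul_one, hYX, det_smul, det_one,
      mul_one]
    exact (Ne.isUnit hcc).pow _
  · simp only [fromBlocks_transpose, fromBlocks_multiply, transpose_one, transpose_smul,
      transpose_sub, transpose_add, transpose_neg, hS.eq, Matrix.mul_one, Matrix.one_mul,
      Matrix.mul_smul, Matrix.smul_mul, Matrix.mul_zero, add_zero]
    congr 1
    · linear_combination (norm := module) hc • (1 - S)
    · linear_combination (norm := module) -(hc • S)
    · linear_combination (norm := module) -(hc • S)
    · linear_combination (norm := module) -(hc • (1 + S))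

end Matrix

/-- For `D ≠ 0` the Lychagin–Rubtsov symmetric matrix `g` is congruent to
`diag(1,1,−1,−1)`: the associated symmetric bilinear form on `ℝ⁴` is nondegenerate
of split signature `(2,2)`. -/
theorem LR_metric_split_signature (A B C D : ℝ) (hD : D ≠ 0)
    (g : Matrix (Fin 4) (Fin 4) ℝ)
    (hg : g = !![2*C, -2*B, D, 0; -2*B, 2*A, 0, D; D, 0, 0, 0; 0, D, 0, 0]) :
    ∃ Q : Matrix (Fin 4) (Fin 4) ℝ, IsUnit Q ∧
      Qᵀ * g * Q = Matrix.diagonal ![1, 1, -1, -1] := by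
  let e : Fin 2 ⊕ Fin 2 ≃ Fin 4 := finSumFinEquiv
  let S : Matrix (Fin 2) (Fin 2) ℝ := !![2*C, -2*B; -2*B, 2*A]
  have hS : S.IsSymm := by
    ext i j
    fin_cases i <;> fin_cases j <;> rfl
  have hg_blocks : g = reindex e e (fromBlocks S (D • 1) (D • 1) 0) := by
    subst hg
    ext i j
    fin_cases i <;> fin_cases j <;> simp [e, S, finSumFinEquiv, Fin.addCases]
  have hdiag_blocks :
      diagonal ![1, 1, -1, -1] = reindex e e (fromBlocks (1 : Matrix _ _ ℝ) 0 0 (-1)) := by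
    ext i j
    fin_cases i <;> fin_cases j <;> simp [e, finSumFinEquiv, Fin.addCases]
  rw [hg_blocks, hdiag_blocks]
  exact (congruent_fromBlocks_smul_one two_ne_zero hS hD).reindex e
end

section
/- Let ε₁, ε₂, ε₃ ∈ {−1, 1} and define the 8×8 real matrices J₁ = [[ρ, 0], [0, ε₁·ρ]], J₂ = [[0, α], [ε₂·α, 0]], J₃ = [[0, Ω], [ε₃·Ω, 0]], where ρ = [[0, A], [A, 0]], α = [[A, 0], [0, −A]], Ω = [[0, I₂], [−I₂, 0]] are 4×4 matrices and A = [[0, −1], [1, 0]]. Then the three anticommutators J₁J₂ + J₂J₁, J₂J₃ + J₃J₂, J₁J₃ + J₃J₁ all vanish if and only if ε₁ = 1 and ε₂ = ε₃. -/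
open Matrix

/-- The 2×2 block `A = [[0,−1],[1,0]]`. -/
def A2 : Matrix (Fin 2) (Fin 2) ℝ := !![0, -1; 1, 0]

/-- The complex structure `ρ = [[0,A],[A,0]]`. -/
def ρm : Matrix (Fin 2 ⊕ Fin 2) (Fin 2 ⊕ Fin 2) ℝ := Matrix.fromBlocks 0 A2 A2 0

/-- The matrix `α = [[A,0],[0,−A]]` of the 2-form `dp∧dq − dx∧dy`. -/
def αm : Matrix (Fin 2 ⊕ Fin 2) (Fin 2 ⊕ Fin 2) ℝ := Matrix.fromBlocks A2 0 0 (-A2)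

/-- The matrix `Ω = [[0,I₂],[−I₂,0]]` of the canonical symplectic form. -/
def Ωm : Matrix (Fin 2 ⊕ Fin 2) (Fin 2 ⊕ Fin 2) ℝ := Matrix.fromBlocks 0 1 (-1) 0

lemma A2_sq : A2 * A2 = -1 := by
  ext i j
  fin_cases i <;> fin_cases j <;>
    simp [A2, Matrix.mul_apply, Fin.sum_univ_two, Matrix.one_apply]

lemma hρα : ρm * αm = Ωm := by
  simp [ρm, αm, Ωm, Matrix.fromBlocks_multiply, A2_sq, Matrix.mul_neg]

lemma hαρ : αm * ρm = -Ωm := by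
  simp [ρm, αm, Ωm, Matrix.fromBlocks_multiply, A2_sq, Matrix.fromBlocks_neg, Matrix.neg_mul]

lemma hαΩ : αm * Ωm = ρm := by
  simp [ρm, αm, Ωm, Matrix.fromBlocks_multiply]

lemma hΩα : Ωm * αm = -ρm := by
  simp [ρm, αm, Ωm, Matrix.fromBlocks_multiply, Matrix.fromBlocks_neg]

lemma hρΩ : ρm * Ωm = -αm := by
  simp [ρm, αm, Ωm, Matrix.fromBlocks_multiply, Matrix.fromBlocks_neg]

lemma hΩρ : Ωm * ρm = αm := by
  simp [ρm, αm, Ωm, Matrix.fromBlocks_multiply]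

lemma Ωm_ne : Ωm ≠ 0 := by
  intro h
  have := congrFun (congrFun h (Sum.inl 0)) (Sum.inr 0)
  simp [Ωm, Matrix.one_apply] at this

lemma ρm_ne : ρm ≠ 0 := by
  intro h
  have := congrFun (congrFun h (Sum.inl 0)) (Sum.inr 1)
  simp [ρm, A2] at this

lemma αm_ne : αm ≠ 0 := by
  intro h
  have := congrFun (congrFun h (Sum.inl 0)) (Sum.inl 1)
  simp [αm, A2] at this

lemma offdiag_zero {M : Matrix (Fin 2 ⊕ Fin 2) (Fin 2 ⊕ Fin 2) ℝ} (hM : M ≠ 0) (a b : ℝ) :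
    Matrix.fromBlocks (0 : Matrix (Fin 2 ⊕ Fin 2) (Fin 2 ⊕ Fin 2) ℝ) (a • M) (b • M) 0 = 0
      ↔ a = 0 ∧ b = 0 := by
  constructor
  · intro h
    have h12 := congrArg Matrix.toBlocks₁₂ h
    have h21 := congrArg Matrix.toBlocks₂₁ h
    rw [Matrix.toBlocks_fromBlocks₁₂] at h12
    rw [Matrix.toBlocks_fromBlocks₂₁] at h21
    have z12 : (0 : Matrix ((Fin 2 ⊕ Fin 2) ⊕ (Fin 2 ⊕ Fin 2))
        ((Fin 2 ⊕ Fin 2) ⊕ (Fin 2 ⊕ Fin 2)) ℝ).toBlocks₁₂ = 0 := rfl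
    have z21 : (0 : Matrix ((Fin 2 ⊕ Fin 2) ⊕ (Fin 2 ⊕ Fin 2))
        ((Fin 2 ⊕ Fin 2) ⊕ (Fin 2 ⊕ Fin 2)) ℝ).toBlocks₂₁ = 0 := rfl
    rw [z12, smul_eq_zero] at h12
    rw [z21, smul_eq_zero] at h21
    exact ⟨h12.resolve_right hM, h21.resolve_right hM⟩
  · rintro ⟨rfl, rfl⟩
    simp

lemma diag_zero {M : Matrix (Fin 2 ⊕ Fin 2) (Fin 2 ⊕ Fin 2) ℝ} (hM : M ≠ 0) (a b : ℝ) :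
    Matrix.fromBlocks (a • M) (0 : Matrix (Fin 2 ⊕ Fin 2) (Fin 2 ⊕ Fin 2) ℝ) 0 (b • M) = 0
      ↔ a = 0 ∧ b = 0 := by
  constructor
  · intro h
    have h11 := congrArg Matrix.toBlocks₁₁ h
    have h22 := congrArg Matrix.toBlocks₂₂ h
    rw [Matrix.toBlocks_fromBlocks₁₁] at h11
    rw [Matrix.toBlocks_fromBlocks₂₂] at h22
    have z11 : (0 : Matrix ((Fin 2 ⊕ Fin 2) ⊕ (Fin 2 ⊕ Fin 2))
        ((Fin 2 ⊕ Fin 2) ⊕ (Fin 2 ⊕ Fin 2)) ℝ).toBlocks₁₁ = 0 := rfl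
    have z22 : (0 : Matrix ((Fin 2 ⊕ Fin 2) ⊕ (Fin 2 ⊕ Fin 2))
        ((Fin 2 ⊕ Fin 2) ⊕ (Fin 2 ⊕ Fin 2)) ℝ).toBlocks₂₂ = 0 := rfl
    rw [z11, smul_eq_zero] at h11
    rw [z22, smul_eq_zero] at h22
    exact ⟨h11.resolve_right hM, h22.resolve_right hM⟩
  · rintro ⟨rfl, rfl⟩
    simp

/-- The triple `J₁, J₂, J₃` pairwise anticommutes if and only if
`ε₁ = 1` and `ε₂ = ε₃`. -/
theorem anticommuting_iff (ε₁ ε₂ ε₃ : ℝ)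
    (hε₁ : ε₁ = 1 ∨ ε₁ = -1) (hε₂ : ε₂ = 1 ∨ ε₂ = -1) (hε₃ : ε₃ = 1 ∨ ε₃ = -1)
    (J₁ J₂ J₃ : Matrix ((Fin 2 ⊕ Fin 2) ⊕ (Fin 2 ⊕ Fin 2)) ((Fin 2 ⊕ Fin 2) ⊕ (Fin 2 ⊕ Fin 2)) ℝ)
    (hJ₁ : J₁ = Matrix.fromBlocks ρm 0 0 (ε₁ • ρm))
    (hJ₂ : J₂ = Matrix.fromBlocks 0 αm (ε₂ • αm) 0)
    (hJ₃ : J₃ = Matrix.fromBlocks 0 Ωm (ε₃ • Ωm) 0) :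
    (J₁ * J₂ + J₂ * J₁ = 0 ∧ J₂ * J₃ + J₃ * J₂ = 0 ∧ J₁ * J₃ + J₃ * J₁ = 0)
      ↔ (ε₁ = 1 ∧ ε₂ = ε₃) := by
  subst hJ₁ hJ₂ hJ₃
  have e1 : Matrix.fromBlocks ρm 0 0 (ε₁ • ρm) * Matrix.fromBlocks 0 αm (ε₂ • αm) 0
      + Matrix.fromBlocks 0 αm (ε₂ • αm) 0 * Matrix.fromBlocks ρm 0 0 (ε₁ • ρm)
      = Matrix.fromBlocks 0 ((1 - ε₁) • Ωm) ((ε₂ * (ε₁ - 1)) • Ωm) 0 := by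
    simp only [Matrix.fromBlocks_multiply, Matrix.fromBlocks_add, Matrix.smul_mul,
      Matrix.mul_smul, hρα, hαρ, smul_smul, smul_neg, mul_zero, zero_mul,
      add_zero, zero_add]
    rw [Matrix.fromBlocks_inj]
    refine ⟨by simp, by module, by module, by simp⟩
  have e2 : Matrix.fromBlocks 0 αm (ε₂ • αm) 0 * Matrix.fromBlocks 0 Ωm (ε₃ • Ωm) 0
      + Matrix.fromBlocks 0 Ωm (ε₃ • Ωm) 0 * Matrix.fromBlocks 0 αm (ε₂ • αm) 0
      = Matrix.fromBlocks ((ε₃ - ε₂) • ρm) 0 0 ((ε₂ - ε₃) • ρm) := by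
    simp only [Matrix.fromBlocks_multiply, Matrix.fromBlocks_add, Matrix.smul_mul,
      Matrix.mul_smul, hαΩ, hΩα, smul_smul, smul_neg, mul_zero, zero_mul,
      add_zero, zero_add]
    rw [Matrix.fromBlocks_inj]
    refine ⟨by module, by simp, by simp, by module⟩
  have e3 : Matrix.fromBlocks ρm 0 0 (ε₁ • ρm) * Matrix.fromBlocks 0 Ωm (ε₃ • Ωm) 0
      + Matrix.fromBlocks 0 Ωm (ε₃ • Ωm) 0 * Matrix.fromBlocks ρm 0 0 (ε₁ • ρm)
      = Matrix.fromBlocks 0 ((ε₁ - 1) • αm) ((ε₃ * (1 - ε₁)) • αm) 0 := by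
    simp only [Matrix.fromBlocks_multiply, Matrix.fromBlocks_add, Matrix.smul_mul,
      Matrix.mul_smul, hρΩ, hΩρ, smul_smul, smul_neg, mul_zero, zero_mul,
      add_zero, zero_add]
    rw [Matrix.fromBlocks_inj]
    refine ⟨by simp, by module, by module, by simp⟩
  rw [e1, e2, e3, offdiag_zero Ωm_ne, diag_zero ρm_ne, offdiag_zero αm_ne]
  constructor
  · rintro ⟨⟨h1, -⟩, ⟨h2, -⟩, -⟩
    constructor <;> linarith
  · rintro ⟨rfl, rfl⟩
    norm_num
end
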